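/- arXiv:2501.05657 — 2 statements merged into one kernel-verified Lean document; each statement's English description precedes it below -/
import Mathlib

section
/- Fix d > 0 and s > 0. Define b(M) = (1/M)·( Σ_{n=1}^{M} 1/√(d² + ((n − 1/2)·s)²) )² for positive integers M. Then lim_{M→∞} b(M) = 0. -/
open Filter

lemma aux_log_sq_div : Tendsto (fun x : ℝ => (1 + Real.log x) ^ 2 / x) atTop (nhds 0) := by
  have h1 : Tendsto (fun x : ℝ => x⁻¹) atTop (nhds 0) := tendsto_inv_atTop_zero
  have h2 := Real.tendsto_pow_log_div_mul_add_atTop 1 0 1 one_ne_zero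
  have h3 := Real.tendsto_pow_log_div_mul_add_atTop 1 0 2 one_ne_zero
  have := (h1.add ((h2.const_mul 2).add h3))
  simp only [mul_zero, add_zero, zero_add] at this
  refine this.congr fun x => ?_
  simp only [one_mul, add_zero, pow_one, add_sq, one_pow, mul_one, add_div, mul_div_assoc,
    inv_eq_one_div]
  ring

/-- The discrete phase-aligned bound `b(M)` vanishes as `M → ∞`. -/
theorem discrete_bound_tendsto_zero (d s : ℝ) (hd : 0 < d) (hs : 0 < s) :
    Tendsto
      (fun M : ℕ =>
        (1 / (M : ℝ)) *
          (∑ n ∈ Finset.Icc 1 M,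
            1 / Real.sqrt (d ^ 2 + (((n : ℝ) - 1 / 2) * s) ^ 2)) ^ 2)
      atTop (nhds 0) := by
  have hbound : Tendsto (fun M : ℕ => (2 / s) ^ 2 * ((1 + Real.log M) ^ 2 / M)) atTop (nhds 0) := by
    have := (aux_log_sq_div.comp tendsto_natCast_atTop_atTop).const_mul ((2 / s) ^ 2)
    simpa using this
  refine squeeze_zero' ?_ ?_ hbound
  · filter_upwards with M
    positivity
  · filter_upwards [eventually_ge_atTop 1] with M hM
    have hsum : (∑ n ∈ Finset.Icc 1 M,
        1 / Real.sqrt (d ^ 2 + (((n : ℝ) - 1 / 2) * s) ^ 2)) ≤ (2 / s) * (1 + Real.log M) := by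
      have step : (∑ n ∈ Finset.Icc 1 M,
          1 / Real.sqrt (d ^ 2 + (((n : ℝ) - 1 / 2) * s) ^ 2)) ≤
          ∑ n ∈ Finset.Icc 1 M, (2 / s) * (n : ℝ)⁻¹ := by
        refine Finset.sum_le_sum fun n hn => ?_
        have hn1 : (1 : ℕ) ≤ n := (Finset.mem_Icc.mp hn).1
        have hn1' : (1 : ℝ) ≤ (n : ℝ) := by exact_mod_cast hn1
        have hkey : (n : ℝ) / 2 * s ≤ Real.sqrt (d ^ 2 + (((n : ℝ) - 1 / 2) * s) ^ 2) := by
          have h1 : (n : ℝ) / 2 * s ≤ ((n : ℝ) - 1 / 2) * s := by nlinarith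
          refine h1.trans (Real.le_sqrt_of_sq_le ?_)
          nlinarith
        have hpos : (0 : ℝ) < (n : ℝ) / 2 * s := by positivity
        calc 1 / Real.sqrt (d ^ 2 + (((n : ℝ) - 1 / 2) * s) ^ 2)
            ≤ 1 / ((n : ℝ) / 2 * s) := by
              apply one_div_le_one_div_of_le hpos hkey
          _ = (2 / s) * (n : ℝ)⁻¹ := by field_simp
      rw [← Finset.mul_sum] at step
      refine step.trans ?_
      have hh : (∑ n ∈ Finset.Icc 1 M, ((n : ℝ))⁻¹) = (harmonic M : ℝ) := by
        rw [harmonic_eq_sum_Icc]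
        push_cast
        rfl
      rw [hh]
      have := harmonic_le_one_add_log M
      have h2s : (0 : ℝ) ≤ 2 / s := by positivity
      nlinarith
    have hsumnn : (0 : ℝ) ≤ ∑ n ∈ Finset.Icc 1 M,
        1 / Real.sqrt (d ^ 2 + (((n : ℝ) - 1 / 2) * s) ^ 2) := by positivity
    have hsq := pow_le_pow_left₀ hsumnn hsum 2
    have hMpos : (0 : ℝ) < M := by exact_mod_cast hM
    calc (1 / (M : ℝ)) * (∑ n ∈ Finset.Icc 1 M,
          1 / Real.sqrt (d ^ 2 + (((n : ℝ) - 1 / 2) * s) ^ 2)) ^ 2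
        ≤ (1 / (M : ℝ)) * ((2 / s) * (1 + Real.log M)) ^ 2 := by
          apply mul_le_mul_of_nonneg_left hsq (by positivity)
      _ = (2 / s) ^ 2 * ((1 + Real.log M) ^ 2 / M) := by ring
end

section
/- Fix d > 0 and s > 0. Define b(M) = (1/M)·( Σ_{n=1}^{M} 1/√(d² + ((n − 1/2)·s)²) )² for positive integers M. Then there exists a positive integer M* such that b(M) ≤ b(M*) for all positive integers M. -/
/-!
Each antenna contributes at most `1 / ((n - 1/2) s) ≤ 2 / (s n)`, so the sum of the first `M`
contributions is at most `(2 / s) (1 + log M)` by the harmonic-number bound. Hence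
`b(M) ≤ (4 / s²) (1 + log M)² / M → 0`, while `b(1) > 0`; a sequence tending to `0` with a
positive value attains its supremum, and the maximiser is not `0` because `b(0) = 0` (with `1 / 0 = 0`).
-/

open Finset Filter Topology Real

theorem Real.tendsto_one_add_log_sq_div_atTop :
    Tendsto (fun x : ℝ => (1 + log x) ^ 2 / x) atTop (𝓝 0) := by
  have hpow (k : ℕ) : Tendsto (fun x : ℝ => log x ^ k / x) atTop (𝓝 0) := by
    simpa using tendsto_pow_log_div_mul_add_atTop 1 0 k one_ne_zero
  have hsum := ((hpow 0).add ((hpow 1).const_mul 2)).add (hpow 2)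
  simp only [mul_zero, add_zero] at hsum
  refine hsum.congr fun x => ?_
  ring

theorem tendsto_sq_sum_Icc_div_of_le_div {f : ℕ → ℝ} {C : ℝ} (hf0 : ∀ n, 0 ≤ f n)
    (hf : ∀ n, 0 < n → f n ≤ C / n) :
    Tendsto (fun M : ℕ => (∑ n ∈ Icc 1 M, f n) ^ 2 / M) atTop (𝓝 0) := by
  have hC : 0 ≤ C := by simpa using (hf0 1).trans (hf 1 one_pos)
  have hsum (M : ℕ) : ∑ n ∈ Icc 1 M, f n ≤ C * (1 + log M) := calc
    ∑ n ∈ Icc 1 M, f n ≤ ∑ n ∈ Icc 1 M, C / n := sum_le_sum fun n hn => hf n (mem_Icc.1 hn).1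
    _ = C * harmonic M := by simp [harmonic_eq_sum_Icc, mul_sum, div_eq_mul_inv]
    _ ≤ C * (1 + log M) := mul_le_mul_of_nonneg_left (harmonic_le_one_add_log M) hC
  have hbound (M : ℕ) : (∑ n ∈ Icc 1 M, f n) ^ 2 / M ≤ C ^ 2 * ((1 + log M) ^ 2 / M) := by
    rw [← mul_div_assoc, ← mul_pow]
    gcongr
    · exact sum_nonneg fun n _ => hf0 n
    · exact hsum M
  have hlim : Tendsto (fun M : ℕ => C ^ 2 * ((1 + log M) ^ 2 / M)) atTop (𝓝 0) := by
    simpa using (tendsto_one_add_log_sq_div_atTop.comp tendsto_natCast_atTop_atTop).const_mul (C ^ 2)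
  exact squeeze_zero (fun M => by positivity) hbound hlim

theorem exists_forall_le_of_tendsto_zero {g : ℕ → ℝ} (hg : Tendsto g atTop (𝓝 0)) {m : ℕ}
    (hm : 0 < g m) : ∃ k, ∀ n, g n ≤ g k := by
  refine continuous_of_discreteTopology.exists_forall_ge' m ?_
  rw [cocompact_eq_atTop]
  exact (hg.eventually (gt_mem_nhds hm)).mono fun _ => le_of_lt

noncomputable def antennaGain (d s : ℝ) (n : ℕ) : ℝ :=
  1 / √(d ^ 2 + ((n - 1 / 2) * s) ^ 2)

noncomputable def arrayGainBound (d s : ℝ) (M : ℕ) : ℝ :=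
  1 / M * (∑ n ∈ Icc 1 M, antennaGain d s n) ^ 2

theorem antennaGain_nonneg (d s : ℝ) (n : ℕ) : 0 ≤ antennaGain d s n := by
  unfold antennaGain; positivity

theorem antennaGain_le {s : ℝ} (d : ℝ) (hs : 0 < s) {n : ℕ} (hn : 0 < n) :
    antennaGain d s n ≤ 2 / s / n := by
  have hn1 : (1 : ℝ) ≤ n := by exact_mod_cast hn
  have hx : 0 < (n - 1 / 2 : ℝ) * s := by nlinarith
  calc antennaGain d s n ≤ 1 / ((n - 1 / 2) * s) :=
        one_div_le_one_div_of_le hx (le_sqrt_of_sq_le (by nlinarith))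
    _ ≤ 2 / s / n := by
        rw [div_div, div_le_div_iff₀ hx (by positivity)]
        nlinarith

theorem antennaGain_pos (d : ℝ) {s : ℝ} (hs : 0 < s) {n : ℕ} (hn : 0 < n) :
    0 < antennaGain d s n := by
  have hn1 : (1 : ℝ) ≤ n := by exact_mod_cast hn
  have hx : 0 < (n - 1 / 2 : ℝ) * s := by nlinarith
  unfold antennaGain; positivity

theorem arrayGainBound_zero (d s : ℝ) : arrayGainBound d s 0 = 0 := by
  simp [arrayGainBound]

theorem arrayGainBound_one_pos (d : ℝ) {s : ℝ} (hs : 0 < s) : 0 < arrayGainBound d s 1 := by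
  simpa [arrayGainBound] using pow_pos (antennaGain_pos d hs one_pos) 2

theorem tendsto_arrayGainBound_atTop (d : ℝ) {s : ℝ} (hs : 0 < s) :
    Tendsto (arrayGainBound d s) atTop (𝓝 0) := by
  refine (tendsto_sq_sum_Icc_div_of_le_div (antennaGain_nonneg d s)
    fun n hn => antennaGain_le d hs hn).congr fun M => ?_
  rw [arrayGainBound, one_div_mul_eq_div]

theorem discrete_bound_attains_max_general (d s : ℝ) (hs : 0 < s) :
    ∃ Mstar : ℕ, 0 < Mstar ∧
      ∀ M : ℕ, 0 < M →
        (1 / (M : ℝ)) *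
            (∑ n ∈ Finset.Icc 1 M,
              1 / Real.sqrt (d ^ 2 + (((n : ℝ) - 1 / 2) * s) ^ 2)) ^ 2 ≤
          (1 / (Mstar : ℝ)) *
            (∑ n ∈ Finset.Icc 1 Mstar,
              1 / Real.sqrt (d ^ 2 + (((n : ℝ) - 1 / 2) * s) ^ 2)) ^ 2 := by
  obtain ⟨Mstar, hmax⟩ := exists_forall_le_of_tendsto_zero (tendsto_arrayGainBound_atTop d hs)
    (arrayGainBound_one_pos d hs)
  refine ⟨Mstar, Nat.pos_of_ne_zero ?_, fun M _ => hmax M⟩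
  rintro rfl
  linarith [hmax 1, arrayGainBound_one_pos d hs, arrayGainBound_zero d s]

/-- Remark 1: there exists an optimal number of antennas maximizing `b(M)`. -/
theorem discrete_bound_attains_max (d s : ℝ) (hd : 0 < d) (hs : 0 < s) :
    ∃ Mstar : ℕ, 0 < Mstar ∧
      ∀ M : ℕ, 0 < M →
        (1 / (M : ℝ)) *
            (∑ n ∈ Finset.Icc 1 M,
              1 / Real.sqrt (d ^ 2 + (((n : ℝ) - 1 / 2) * s) ^ 2)) ^ 2 ≤
          (1 / (Mstar : ℝ)) *
            (∑ n ∈ Finset.Icc 1 Mstar,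
              1 / Real.sqrt (d ^ 2 + (((n : ℝ) - 1 / 2) * s) ^ 2)) ^ 2 :=
  discrete_bound_attains_max_general d s hs
end
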